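/- In the partially linear network model, the partialled-out equation holds: Y − ℓ₀ = θ₀ • (T − m₀) + α₀ • (fun ω => A.mulVec ((T − m₀) ω)) + ε^Y almost surely; that is, Y − E[Y ∣ 𝒢] = (θ₀ I + α₀ A) applied to (T − E[T ∣ 𝒢]) plus ε^Y, almost surely. -/

import Mathlib

/-! The model is linear in `T` through the single operator `θ₀ I + α₀ A`; conditioning on `𝒢`
commutes with that operator, fixes the `𝒢`-measurable nuisance `g`, and kills the noise by the
tower property, so subtracting `E[Y ∣ 𝒢]` from `Y` leaves the operator applied to `T − E[T ∣ 𝒢]`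
plus the noise. -/

open MeasureTheory ProbabilityTheory
open scoped RealInnerProductSpace ENNReal

/-- The action of the matrix `A` on vectors, `A.mulVec`, viewed as a map of
`EuclideanSpace ℝ (Fin n)` (it is definitionally `A.mulVec`). -/
noncomputable def mulVecE {n : ℕ} (A : Matrix (Fin n) (Fin n) ℝ)
    (v : EuclideanSpace ℝ (Fin n)) : EuclideanSpace ℝ (Fin n) :=
  WithLp.toLp 2 (A.mulVec v)

namespace MeasureTheory

variable {Ω E F : Type*} {m m₀ : MeasurableSpace Ω} {μ : Measure Ω}
  [NormedAddCommGroup E] [NormedSpace ℝ E] [CompleteSpace E]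
  [NormedAddCommGroup F] [NormedSpace ℝ F] [CompleteSpace F]

lemma condExp_ae_eq_zero_of_le {m' : MeasurableSpace Ω} (hm : m ≤ m') (hm' : m' ≤ m₀)
    [SigmaFinite (μ.trim hm')] {ε : Ω → F} (hε : μ[ε | m'] =ᵐ[μ] 0) :
    μ[ε | m] =ᵐ[μ] 0 :=
  calc μ[ε | m] =ᵐ[μ] μ[μ[ε | m'] | m] := (condExp_condExp_of_le hm hm').symm
    _ =ᵐ[μ] μ[(0 : Ω → F) | m] := condExp_congr_ae hε
    _ = 0 := condExp_zero

lemma condExp_clm_comp_add_add_ae_eq [IsFiniteMeasure μ] (hm : m ≤ m₀) (L : E →L[ℝ] F)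
    {f : Ω → E} {g ε : Ω → F} (hf : Integrable f μ) (hg_meas : StronglyMeasurable[m] g)
    (hg : Integrable g μ) (hε : Integrable ε μ) (hε_cond : μ[ε | m] =ᵐ[μ] 0) :
    μ[L ∘ f + g + ε | m] =ᵐ[μ] L ∘ μ[f | m] + g := by
  have hLf : Integrable (L ∘ f) μ := L.integrable_comp hf
  calc μ[L ∘ f + g + ε | m]
      =ᵐ[μ] μ[L ∘ f | m] + μ[g | m] + μ[ε | m] :=
        (condExp_add (hLf.add hg) hε m).trans ((condExp_add hLf hg m).add .rfl)
    _ =ᵐ[μ] L ∘ μ[f | m] + g + 0 := by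
        rw [condExp_of_stronglyMeasurable hm hg_meas hg]
        exact ((L.comp_condExp_comm hf).symm.add .rfl).add hε_cond
    _ = L ∘ μ[f | m] + g := add_zero _

lemma sub_condExp_clm_comp_add_add_ae_eq [IsFiniteMeasure μ] (hm : m ≤ m₀) (L : E →L[ℝ] F)
    {f : Ω → E} {g ε : Ω → F} (hf : Integrable f μ) (hg_meas : StronglyMeasurable[m] g)
    (hg : Integrable g μ) (hε : Integrable ε μ) (hε_cond : μ[ε | m] =ᵐ[μ] 0) :
    L ∘ f + g + ε - μ[L ∘ f + g + ε | m] =ᵐ[μ] L ∘ (f - μ[f | m]) + ε := by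
  filter_upwards [condExp_clm_comp_add_add_ae_eq hm L hf hg_meas hg hε hε_cond] with ω hω
  simp only [Pi.sub_apply, Pi.add_apply, Function.comp_apply, hω, map_sub]
  abel

end MeasureTheory

theorem partialled_out_equation
    {Ω : Type*} {ℱ : MeasurableSpace Ω} {P : Measure Ω} [IsProbabilityMeasure P]
    {n : ℕ} (A : Matrix (Fin n) (Fin n) ℝ)
    (𝒢 ℋ : MeasurableSpace Ω) (h𝒢ℋ : 𝒢 ≤ ℋ) (hℋℱ : ℋ ≤ ℱ)
    (T g εY Y : Ω → EuclideanSpace ℝ (Fin n)) (θ₀ α₀ : ℝ)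
    (hT_int : Integrable T P)
    (hg_meas : StronglyMeasurable[𝒢] g) (hg_int : Integrable g P)
    (hεY_int : Integrable εY P)
    (hεY_cond : P[εY|ℋ] =ᵐ[P] 0)
    (hY : Y = θ₀ • T + α₀ • (fun ω => mulVecE A (T ω)) + g + εY) :
    Y - P[Y|𝒢] =ᵐ[P]
      θ₀ • (T - P[T|𝒢]) + α₀ • (fun ω => mulVecE A ((T - P[T|𝒢]) ω)) + εY := by
  set L : EuclideanSpace ℝ (Fin n) →L[ℝ] EuclideanSpace ℝ (Fin n) :=
    θ₀ • ContinuousLinearMap.id ℝ _ + α₀ • Matrix.toEuclideanCLM (𝕜 := ℝ) A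
  have hL : ∀ X : Ω → EuclideanSpace ℝ (Fin n),
      θ₀ • X + α₀ • (fun ω => mulVecE A (X ω)) = L ∘ X := fun _ => rfl
  rw [hY, hL, hL]
  exact sub_condExp_clm_comp_add_add_ae_eq (h𝒢ℋ.trans hℋℱ) L hT_int hg_meas hg_int hεY_int
    (condExp_ae_eq_zero_of_le h𝒢ℋ hℋℱ hεY_cond)
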